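/- Let W = {w_{ir}} ∈ ℝ^{n×n} be doubly stochastic, let f_1,…,f_n : ℝ^p → ℝ be differentiable and L-smooth, let α ∈ ℝ, and let x, y ∈ (ℝ^p)^n be n-tuples with x̄ := (1/n)∑_i x_i. Define x⁺_i := ∑_{r=1}^n w_{ir} x_r − α y_i for each i. Then ∑_{i=1}^n ‖∇f_i(x⁺_i) − ∇f_i(x_i)‖² ≤ 8L² ∑_{i=1}^n ‖x_i − x̄‖² + 2α²L² ∑_{i=1}^n ‖y_i‖². -/

import Mathlib

/-!
By `L`-smoothness it suffices to bound `∑ᵢ ‖x⁺ᵢ - xᵢ‖²`. Centering at `x̄` and using that the rows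
of `W` sum to one, `x⁺ᵢ - xᵢ = (∑ᵣ wᵢᵣ (xᵣ - x̄) - (xᵢ - x̄)) - α yᵢ`. Two applications of
`‖u - v‖² ≤ 2‖u‖² + 2‖v‖²` and Jensen's inequality for the convex function `‖·‖²` give
`‖x⁺ᵢ - xᵢ‖² ≤ 4 ∑ᵣ wᵢᵣ ‖xᵣ - x̄‖² + 4 ‖xᵢ - x̄‖² + 2α² ‖yᵢ‖²`, and summing over `i` with the
column sums equal to one yields the constant `8`. The center `x̄` may in fact be any point.
-/

open Finset

lemma norm_sub_sq_le {E : Type*} [SeminormedAddGroup E] (u v : E) :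
    ‖u - v‖ ^ 2 ≤ 2 * (‖u‖ ^ 2 + ‖v‖ ^ 2) :=
  (pow_le_pow_left₀ (norm_nonneg _) (norm_sub_le u v) 2).trans add_sq_le

section NormedSpace

variable {ι E : Type*} [Fintype ι] [NormedAddCommGroup E] [NormedSpace ℝ E]

lemma norm_sum_smul_sq_le {w : ι → ℝ} (hw₀ : ∀ i, 0 ≤ w i) (hw₁ : ∑ i, w i = 1) (v : ι → E) :
    ‖∑ i, w i • v i‖ ^ 2 ≤ ∑ i, w i * ‖v i‖ ^ 2 := by
  simpa using ((convexOn_norm convex_univ).pow (fun x _ => norm_nonneg x) 2).map_sum_le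
    (fun i _ => hw₀ i) hw₁ (fun i _ => Set.mem_univ (v i))

lemma sum_smul_sub_eq_sum_smul_sub {w : ι → ℝ} (hw₁ : ∑ i, w i = 1) (v : ι → E) (c : E) :
    ∑ i, w i • v i - c = ∑ i, w i • (v i - c) := by
  simp only [smul_sub, sum_sub_distrib, ← sum_smul, hw₁, one_smul]

lemma norm_mixing_step_sub_sq_le {w : ι → ℝ} (hw₀ : ∀ i, 0 ≤ w i) (hw₁ : ∑ i, w i = 1)
    (v : ι → E) (a : ℝ) (y z c : E) :
    ‖(∑ i, w i • v i - a • y) - z‖ ^ 2 ≤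
      4 * ∑ i, w i * ‖v i - c‖ ^ 2 + 4 * ‖z - c‖ ^ 2 + 2 * a ^ 2 * ‖y‖ ^ 2 := by
  have hsplit : (∑ i, w i • v i - a • y) - z = (∑ i, w i • (v i - c) - (z - c)) - a • y := by
    rw [← sum_smul_sub_eq_sum_smul_sub hw₁]
    abel
  have hay : ‖a • y‖ ^ 2 = a ^ 2 * ‖y‖ ^ 2 := by
    rw [norm_smul, Real.norm_eq_abs, mul_pow, sq_abs]
  rw [hsplit]
  nlinarith [norm_sub_sq_le (∑ i, w i • (v i - c) - (z - c)) (a • y),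
    norm_sub_sq_le (∑ i, w i • (v i - c)) (z - c), norm_sum_smul_sq_le hw₀ hw₁ (v · - c)]

lemma sum_norm_mixing_step_sub_sq_le [DecidableEq ι] {W : Matrix ι ι ℝ}
    (hW : W ∈ doublyStochastic ℝ ι) (a : ℝ) (x y : ι → E) (c : E) :
    ∑ i, ‖(∑ r, W i r • x r - a • y i) - x i‖ ^ 2 ≤
      8 * ∑ i, ‖x i - c‖ ^ 2 + 2 * a ^ 2 * ∑ i, ‖y i‖ ^ 2 := by
  have hcol : ∑ i, ∑ r, W i r * ‖x r - c‖ ^ 2 = ∑ r, ‖x r - c‖ ^ 2 := by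
    rw [sum_comm]
    simp only [← sum_mul, sum_col_of_mem_doublyStochastic hW, one_mul]
  calc ∑ i, ‖(∑ r, W i r • x r - a • y i) - x i‖ ^ 2
      ≤ ∑ i, (4 * ∑ r, W i r * ‖x r - c‖ ^ 2 + 4 * ‖x i - c‖ ^ 2 + 2 * a ^ 2 * ‖y i‖ ^ 2) :=
        sum_le_sum fun i _ => norm_mixing_step_sub_sq_le
          (fun _ => nonneg_of_mem_doublyStochastic hW) (sum_row_of_mem_doublyStochastic hW i)
          (x ·) a (y i) (x i) c
    _ = 8 * ∑ i, ‖x i - c‖ ^ 2 + 2 * a ^ 2 * ∑ i, ‖y i‖ ^ 2 := by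
        simp only [sum_add_distrib, ← mul_sum, hcol]
        ring

end NormedSpace

lemma norm_gradient_sub_sq_le {E : Type*} [NormedAddCommGroup E] [InnerProductSpace ℝ E]
    [CompleteSpace E] {f : E → ℝ} {L : ℝ}
    (hf : ∀ u v, ‖gradient f u - gradient f v‖ ≤ L * ‖u - v‖) (u v : E) :
    ‖gradient f u - gradient f v‖ ^ 2 ≤ L ^ 2 * ‖u - v‖ ^ 2 := by
  rw [← mul_pow]
  exact pow_le_pow_left₀ (norm_nonneg _) (hf u v) 2

theorem gradient_difference_bound {n p : ℕ}
    (W : Matrix (Fin n) (Fin n) ℝ)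
    (hW_nonneg : ∀ i r, 0 ≤ W i r)
    (hW_row : ∀ i, ∑ r, W i r = 1)
    (hW_col : ∀ r, ∑ i, W i r = 1)
    (L : ℝ) (f : Fin n → EuclideanSpace ℝ (Fin p) → ℝ)
    (hsmooth : ∀ i x y, ‖gradient (f i) x - gradient (f i) y‖ ≤ L * ‖x - y‖)
    (α : ℝ) (x y : Fin n → EuclideanSpace ℝ (Fin p)) :
    let xbar : EuclideanSpace ℝ (Fin p) := (1 / (n : ℝ)) • ∑ i, x i
    let xp : Fin n → EuclideanSpace ℝ (Fin p) :=
      fun i => (∑ r, W i r • x r) - α • y i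
    ∑ i, ‖gradient (f i) (xp i) - gradient (f i) (x i)‖ ^ 2 ≤
      8 * L ^ 2 * ∑ i, ‖x i - xbar‖ ^ 2 + 2 * α ^ 2 * L ^ 2 * ∑ i, ‖y i‖ ^ 2 := by
  intro xbar xp
  have hW : W ∈ doublyStochastic ℝ (Fin n) :=
    mem_doublyStochastic_iff_sum.2 ⟨hW_nonneg, hW_row, hW_col⟩
  calc ∑ i, ‖gradient (f i) (xp i) - gradient (f i) (x i)‖ ^ 2
      ≤ ∑ i, L ^ 2 * ‖xp i - x i‖ ^ 2 :=
        sum_le_sum fun i _ => norm_gradient_sub_sq_le (hsmooth i) (xp i) (x i)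
    _ = L ^ 2 * ∑ i, ‖xp i - x i‖ ^ 2 := (mul_sum _ _ _).symm
    _ ≤ L ^ 2 * (8 * ∑ i, ‖x i - xbar‖ ^ 2 + 2 * α ^ 2 * ∑ i, ‖y i‖ ^ 2) :=
        mul_le_mul_of_nonneg_left (sum_norm_mixing_step_sub_sq_le hW α x y xbar) (sq_nonneg L)
    _ = 8 * L ^ 2 * ∑ i, ‖x i - xbar‖ ^ 2 + 2 * α ^ 2 * L ^ 2 * ∑ i, ‖y i‖ ^ 2 := by ring
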